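/- arXiv:1903.11141 — 2 statements merged into one kernel-verified Lean document; each statement's English description precedes it below -/
import Mathlib

section
/- ∑_{n=2}^∞ H_n (ζ(n) − 1) = 1 − γ + ∑_{n=1}^∞ H_n (ζ(n+1) − 1). -/
/-!
Since `H (n + 2) - H (n + 1) = 1 / (n + 2)`, the difference of the two series is
`∑ (ζ (n + 2) - 1) / (n + 2)`. Writing `ζ (n + 2) - 1 = ∑ₘ (m + 2) ^ (-(n + 2))` and summing over `n`
first (all terms are nonnegative), the logarithm series turns the inner sum into
`log (m + 2) - log (m + 1) - 1 / (m + 2)`, and these sum to `1 - γ`. The bound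
`ζ (n + 2) - 1 ≤ 2 ^ (-n) (ζ 2 - 1)` makes both series of the statement converge absolutely.
-/

open Real

theorem HasSum.tsum_swap_of_nonneg {β γ : Type*} {f : β → γ → ℝ} {g : β → ℝ} {a : ℝ}
    (hf : ∀ b c, 0 ≤ f b c) (hrow : ∀ b, HasSum (f b) (g b)) (hg : HasSum g a) :
    HasSum (fun c ↦ ∑' b, f b c) a := by
  have hF : Summable (Function.uncurry f) :=
    (summable_prod_of_nonneg fun p ↦ hf p.1 p.2).2
      ⟨fun b ↦ (hrow b).summable, by simpa only [(hrow _).tsum_eq] using hg.summable⟩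
  have hFa : HasSum (Function.uncurry f) a := by
    rw [← (hF.hasSum.prod_fiberwise hrow).unique hg]
    exact hF.hasSum
  have hF' := (Equiv.prodComm γ β).summable_iff.2 hF
  exact ((Equiv.prodComm γ β).hasSum_iff.2 hFa).prod_fiberwise fun c ↦ (hF'.prod_factor c).hasSum

theorem hasSum_pow_add_two_div {x : ℝ} (hx : |x| < 1) :
    HasSum (fun n : ℕ ↦ x ^ (n + 2) / (n + 2)) (-log (1 - x) - x) := by
  have := (hasSum_nat_add_iff' 1).mpr (hasSum_pow_div_log_of_abs_lt_one hx)
  simpa [add_assoc, one_add_one_eq_two] using this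

noncomputable def zetaTail (s : ℕ) : ℝ := ∑' m : ℕ, 1 / ((m : ℝ) + 2) ^ s

theorem summable_one_div_add_two_pow {s : ℕ} (hs : 1 < s) :
    Summable fun m : ℕ ↦ 1 / ((m : ℝ) + 2) ^ s := by
  simpa using (summable_nat_add_iff 2).mpr (summable_one_div_nat_pow.mpr hs)

theorem riemannZeta_natCast_sub_one {s : ℕ} (hs : 1 < s) :
    riemannZeta s - 1 = zetaTail s := by
  have hsum : Summable fun m : ℕ ↦ 1 / (m : ℝ) ^ s := summable_one_div_nat_pow.mpr hs
  have hsplit : ∑' m : ℕ, 1 / (m : ℝ) ^ s = 1 + zetaTail s := by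
    rw [← hsum.sum_add_tsum_nat_add 2]
    simp [Finset.sum_range_succ, zetaTail, Nat.ne_zero_of_lt hs]
  calc riemannZeta s - 1 = ((∑' m : ℕ, 1 / (m : ℝ) ^ s : ℝ) : ℂ) - 1 := by
        rw [zeta_nat_eq_tsum_of_gt_one hs, Complex.ofReal_tsum]
        push_cast
        rfl
    _ = zetaTail s := by rw [hsplit]; push_cast; ring

theorem zetaTail_nonneg (s : ℕ) : 0 ≤ zetaTail s :=
  tsum_nonneg fun _ ↦ by positivity

theorem zetaTail_add_two_le (n : ℕ) : zetaTail (n + 2) ≤ (1 / 2) ^ n * zetaTail 2 := by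
  rw [zetaTail, zetaTail, ← tsum_mul_left]
  refine (summable_one_div_add_two_pow (by omega)).tsum_le_tsum (fun m ↦ ?_)
    ((summable_one_div_add_two_pow one_lt_two).mul_left _)
  rw [pow_add, ← one_div_mul_one_div, ← one_div_pow]
  gcongr
  linarith [(m.cast_nonneg : (0 : ℝ) ≤ m)]

theorem hasSum_one_div_add_two_pow_div (m : ℕ) :
    HasSum (fun n : ℕ ↦ (1 / ((m : ℝ) + 2)) ^ (n + 2) / (n + 2))
      (ZetaAsymptotics.term (m + 1) 1) := by
  have hm : (0 : ℝ) ≤ m := m.cast_nonneg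
  have hx : |1 / ((m : ℝ) + 2)| < 1 := by
    rw [abs_of_pos (by positivity), div_lt_one (by positivity)]
    linarith
  convert hasSum_pow_add_two_div hx using 1
  have h1x : 1 - 1 / ((m : ℝ) + 2) = (m + 1) / (m + 2) := by field_simp; ring
  rw [ZetaAsymptotics.term_one m.succ_pos, h1x, log_div (by positivity) (by positivity)]
  push_cast
  ring_nf

theorem hasSum_zetaTail_div :
    HasSum (fun n : ℕ ↦ zetaTail (n + 2) / (n + 2)) (1 - eulerMascheroniConstant) := by
  convert HasSum.tsum_swap_of_nonneg (fun m n ↦ by positivity) hasSum_one_div_add_two_pow_div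
    ZetaAsymptotics.term_tsum_one using 2 with n
  simp only [zetaTail, tsum_div_const, one_div_pow]

theorem harmonic_le_self (n : ℕ) : harmonic n ≤ n :=
  calc harmonic n = ∑ i ∈ Finset.range n, ((i + 1 : ℕ) : ℚ)⁻¹ := rfl
    _ ≤ ∑ _i ∈ Finset.range n, 1 :=
      Finset.sum_le_sum fun i _ ↦ inv_le_one_of_one_le₀ (by simp)
    _ = n := by simp

theorem summable_harmonic_mul_zetaTail (k : ℕ) :
    Summable fun n : ℕ ↦ (harmonic (n + k) : ℝ) * zetaTail (n + 2) := by
  have hgeom : Summable fun n : ℕ ↦ ((n : ℝ) + k) * (1 / 2) ^ n := by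
    have h := summable_pow_mul_geometric_of_norm_lt_one 1 (r := (1 / 2 : ℝ)) (by norm_num)
    exact (h.add (summable_geometric_two.mul_left (k : ℝ))).congr fun n ↦ by ring
  refine .of_nonneg_of_le (fun n ↦ mul_nonneg ?_ (zetaTail_nonneg _)) (fun n ↦ ?_)
    (hgeom.mul_right (zetaTail 2))
  · exact_mod_cast (Finset.sum_nonneg fun _ _ ↦ by positivity : (0 : ℚ) ≤ harmonic (n + k))
  · rw [mul_assoc]
    refine mul_le_mul ?_ (zetaTail_add_two_le n) (zetaTail_nonneg _) (by positivity)
    exact_mod_cast harmonic_le_self (n + k)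

theorem tsum_harmonic_add_two_mul_zetaTail :
    ∑' n : ℕ, (harmonic (n + 2) : ℝ) * zetaTail (n + 2) =
      1 - eulerMascheroniConstant + ∑' n : ℕ, (harmonic (n + 1) : ℝ) * zetaTail (n + 2) := by
  have hsplit (n : ℕ) : (harmonic (n + 2) : ℝ) * zetaTail (n + 2) =
      zetaTail (n + 2) / (n + 2) + (harmonic (n + 1) : ℝ) * zetaTail (n + 2) := by
    rw [harmonic_succ]
    push_cast
    ring
  rw [tsum_congr hsplit, hasSum_zetaTail_div.summable.tsum_add (summable_harmonic_mul_zetaTail 1),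
    hasSum_zetaTail_div.tsum_eq]

theorem harmonic_zeta_shift :
    ∑' n : ℕ, (harmonic (n + 2) : ℂ) * (riemannZeta ((n : ℂ) + 2) - 1) =
      1 - (Real.eulerMascheroniConstant : ℂ) +
        ∑' n : ℕ, (harmonic (n + 1) : ℂ) * (riemannZeta ((n : ℂ) + 2) - 1) := by
  have hreal (k n : ℕ) : (harmonic (n + k) : ℂ) * (riemannZeta ((n : ℂ) + 2) - 1) =
      ((harmonic (n + k) * zetaTail (n + 2) : ℝ) : ℂ) := by
    push_cast
    rw [← riemannZeta_natCast_sub_one (by omega : 1 < n + 2)]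
    push_cast
    rfl
  rw [tsum_congr (hreal 2), tsum_congr (hreal 1), ← Complex.ofReal_tsum, ← Complex.ofReal_tsum,
    tsum_harmonic_add_two_mul_zetaTail]
  push_cast
  rfl
end

section
/- ∑_{n=2}^∞ H_n^− (ζ(n) − ζ(n+1)) = π²/6 − γ − ln 2, where H_n^− = 1 − 1/2 + ⋯ + (−1)^{n−1}/n is the n-th skew-harmonic number. -/
/-!
Writing `ζ(n + 2) - ζ(n + 3) = ∑_{k ≥ 2} (1 - 1/k) k^{-(n + 2)}` and swapping the double sum
(all terms are nonnegative) turns the series into `∑_{k ≥ 2} (1 - x) ∑_n H_{n+2}^- x^{n+2}` at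
`x = 1/k`. The generating function `∑ H_n^- x^n = log (1 + x) / (1 - x)`, the Cauchy product of
the series of `log (1 + x)` and `1 / (1 - x)`, evaluates the inner sum to `log (1 + x) - x + x²`.
Summed over `k`, the terms `1/k - log (1 + 1/k)` have partial sums `H_N - log (N + 1) → γ`, and
the terms `1/k²` give `ζ(2) - 1`.
-/

/-- The `n`-th skew-harmonic number `1 - 1/2 + 1/3 - ⋯ + (-1)^(n-1)/n`. -/
noncomputable def skewHarmonic (n : ℕ) : ℝ := ∑ i ∈ Finset.range n, (-1 : ℝ) ^ i / (i + 1)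

open Real Finset

lemma skewHarmonic_succ (n : ℕ) :
    skewHarmonic (n + 1) = skewHarmonic n + (-1) ^ n / (n + 1) :=
  sum_range_succ _ _

lemma skewHarmonic_two_mul_nonneg (k : ℕ) : 0 ≤ skewHarmonic (2 * k) := by
  induction k with
  | zero => simp [skewHarmonic]
  | succ k ih =>
    have hstep : 1 / ((2 * k : ℝ) + 1 + 1) ≤ 1 / ((2 * k : ℝ) + 1) :=
      one_div_le_one_div_of_le (by positivity) (by linarith)
    rw [show 2 * (k + 1) = 2 * k + 1 + 1 by ring, skewHarmonic_succ, skewHarmonic_succ,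
      pow_succ, (even_two_mul k).neg_one_pow]
    push_cast
    linarith [ih, hstep, neg_div ((2 * k : ℝ) + 1 + 1) 1]

lemma skewHarmonic_nonneg (n : ℕ) : 0 ≤ skewHarmonic n := by
  obtain ⟨k, rfl | rfl⟩ := n.even_or_odd'
  · exact skewHarmonic_two_mul_nonneg k
  · rw [skewHarmonic_succ, (even_two_mul k).neg_one_pow]
    have := skewHarmonic_two_mul_nonneg k
    positivity

lemma Real.hasSum_log_one_add_of_abs_lt_one {x : ℝ} (hx : |x| < 1) :
    HasSum (fun n : ℕ => (-1) ^ n * x ^ (n + 1) / (n + 1)) (log (1 + x)) := by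
  have h := (Real.hasSum_pow_div_log_of_abs_lt_one (x := -x) (by rwa [abs_neg])).neg
  rw [sub_neg_eq_add, neg_neg] at h
  refine h.congr_fun fun n => ?_
  rw [neg_pow, pow_succ]
  ring

lemma hasSum_skewHarmonic_mul_pow {x : ℝ} (hx : |x| < 1) :
    HasSum (fun n : ℕ => skewHarmonic (n + 1) * x ^ (n + 1)) (log (1 + x) / (1 - x)) := by
  have hlog : Summable fun n : ℕ => ‖(-1 : ℝ) ^ n * x ^ (n + 1) / (n + 1)‖ := by
    simpa [abs_div, abs_mul, abs_pow, abs_of_pos, Nat.cast_add_one_pos] using!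
      (Real.hasSum_pow_div_log_of_abs_lt_one (x := |x|) (by rwa [abs_abs])).summable
  have hgeom : Summable fun n : ℕ => ‖x ^ n‖ := by
    simpa [norm_pow] using summable_geometric_of_lt_one (abs_nonneg x) hx
  have H := hasSum_sum_range_mul_of_summable_norm hlog hgeom
  rw [(Real.hasSum_log_one_add_of_abs_lt_one hx).tsum_eq,
    tsum_geometric_of_norm_lt_one (by rwa [norm_eq_abs])] at H
  refine H.congr_fun fun n => ?_
  rw [skewHarmonic, sum_mul]
  refine sum_congr rfl fun k hk => ?_
  rw [show x ^ (n + 1) = x ^ (k + 1) * x ^ (n - k) by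
    rw [← pow_add]; congr 1; have := mem_range.mp hk; omega]
  ring

lemma hasSum_skewHarmonic_add_two_mul {x : ℝ} (hx : |x| < 1) :
    HasSum (fun n : ℕ => skewHarmonic (n + 2) * ((1 - x) * x ^ (n + 2)))
      (log (1 + x) - x + x ^ 2) := by
  have h := (hasSum_nat_add_iff' 1).mpr (hasSum_skewHarmonic_mul_pow hx)
  have hx1 : 1 - x ≠ 0 := by linarith [(abs_lt.mp hx).2]
  have hval : log (1 + x) - x + x ^ 2 =
      (1 - x) * (log (1 + x) / (1 - x) - ∑ i ∈ range 1, skewHarmonic (i + 1) * x ^ (i + 1)) := by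
    norm_num [skewHarmonic]
    field_simp
    ring
  rw [hval]
  exact (h.mul_left (1 - x)).congr_fun fun n => mul_left_comm _ _ _

lemma hasSum_inv_sub_log_one_add_inv :
    HasSum (fun k : ℕ => ((k : ℝ) + 1)⁻¹ - log (1 + ((k : ℝ) + 1)⁻¹)) eulerMascheroniConstant := by
  have hnonneg (k : ℕ) : 0 ≤ ((k : ℝ) + 1)⁻¹ - log (1 + ((k : ℝ) + 1)⁻¹) := by
    linarith [log_le_sub_one_of_pos (by positivity : (0 : ℝ) < 1 + ((k : ℝ) + 1)⁻¹)]
  have hpartial (n : ℕ) : ∑ k ∈ range n, (((k : ℝ) + 1)⁻¹ - log (1 + ((k : ℝ) + 1)⁻¹)) =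
      harmonic n - log (n + 1) := by
    induction n with
    | zero => simp
    | succ n ih =>
      have hlog : log ((n : ℝ) + 1 + 1) = log (n + 1) + log (1 + ((n : ℝ) + 1)⁻¹) := by
        rw [← log_mul (by positivity) (by positivity)]
        field_simp
      rw [sum_range_succ, ih, harmonic_succ]
      push_cast
      rw [hlog]
      ring
  rw [hasSum_iff_tendsto_nat_of_nonneg hnonneg]
  simpa only [hpartial] using tendsto_harmonic_sub_log_add_one

lemma hasSum_log_one_add_inv_sub_inv_add_inv_sq :
    HasSum (fun j : ℕ => log (1 + ((j : ℝ) + 2)⁻¹) - ((j : ℝ) + 2)⁻¹ + ((j : ℝ) + 2)⁻¹ ^ 2)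
      (π ^ 2 / 6 - eulerMascheroniConstant - log 2) := by
  have hgamma := (hasSum_nat_add_iff' 1).mpr hasSum_inv_sub_log_one_add_inv
  have hzeta := (hasSum_nat_add_iff' 2).mpr hasSum_zeta_two
  have hval : π ^ 2 / 6 - eulerMascheroniConstant - log 2 =
      π ^ 2 / 6 - ∑ i ∈ range 2, 1 / (i : ℝ) ^ 2 -
      (eulerMascheroniConstant - ∑ i ∈ range 1, (((i : ℝ) + 1)⁻¹ - log (1 + ((i : ℝ) + 1)⁻¹))) := by
    norm_num [sum_range_succ]
    ring
  rw [hval]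
  refine (hzeta.sub hgamma).congr_fun fun j => ?_
  push_cast
  rw [one_div, ← inv_pow, add_assoc, one_add_one_eq_two]
  ring

-- The `k = 0` term is `(0 ^ m)⁻¹ = 0`.
lemma riemannZeta_natCast_eq_tsum {m : ℕ} (hm : 1 < m) :
    riemannZeta m = ((∑' k : ℕ, ((k : ℝ) ^ m)⁻¹ : ℝ) : ℂ) := by
  rw [zeta_nat_eq_tsum_of_gt_one hm, Complex.ofReal_tsum]
  push_cast
  simp [one_div]

lemma riemannZeta_natCast_sub_riemannZeta_natCast_add_one {m : ℕ} (hm : 1 < m) :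
    riemannZeta m - riemannZeta (m + 1) =
      ((∑' j : ℕ, (1 - ((j : ℝ) + 2)⁻¹) * ((j : ℝ) + 2)⁻¹ ^ m : ℝ) : ℂ) := by
  have hs (p : ℕ) (hp : 1 < p) : Summable fun k : ℕ => ((k : ℝ) ^ p)⁻¹ := by
    simpa using Real.summable_one_div_nat_pow.mpr hp
  rw [← Nat.cast_add_one, riemannZeta_natCast_eq_tsum hm, riemannZeta_natCast_eq_tsum (by omega),
    ← Complex.ofReal_sub, ← (hs m hm).tsum_sub (hs (m + 1) (by omega)),
    ← ((hs m hm).sub (hs (m + 1) (by omega))).sum_add_tsum_nat_add 2]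
  have hm0 : m ≠ 0 := by omega
  simp only [sum_range_succ, sum_range_zero, Nat.cast_zero, Nat.cast_one, zero_pow hm0,
    zero_pow (m.succ_ne_zero), one_pow, sub_self, zero_add, inv_zero]
  refine congrArg _ (tsum_congr fun j => ?_)
  push_cast
  rw [inv_pow, pow_succ]
  field_simp

lemma tsum_comm_of_nonneg {β γ : Type*} {f : β → γ → ℝ} (hf : ∀ b c, 0 ≤ f b c) {g : β → ℝ}
    (hrow : ∀ b, HasSum (f b) (g b)) (hg : Summable g) :
    ∑' c, ∑' b, f b c = ∑' b, g b := by
  have hsum : Summable (Function.uncurry f) :=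
    (summable_prod_of_nonneg fun p => hf p.1 p.2).mpr
      ⟨fun b => (hrow b).summable, hg.congr fun b => (hrow b).tsum_eq.symm⟩
  rw [hsum.tsum_comm]
  exact tsum_congr fun b => (hrow b).tsum_eq

theorem skewHarmonic_zeta_diff_series :
    ∑' n : ℕ, (skewHarmonic (n + 2) : ℂ) *
        (riemannZeta ((n : ℂ) + 2) - riemannZeta ((n : ℂ) + 3)) =
      (Real.pi : ℂ) ^ 2 / 6 - (Real.eulerMascheroniConstant : ℂ) - (Real.log 2 : ℂ) := by
  set x : ℕ → ℝ := fun j => ((j : ℝ) + 2)⁻¹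
  have hx_pos (j : ℕ) : 0 < x j := by positivity
  have hx_lt (j : ℕ) : x j < 1 := inv_lt_one_of_one_lt₀ (by linarith [j.cast_nonneg (α := ℝ)])
  have hzeta (n : ℕ) : (skewHarmonic (n + 2) : ℂ) *
      (riemannZeta ((n : ℂ) + 2) - riemannZeta ((n : ℂ) + 3)) =
      ((∑' j, skewHarmonic (n + 2) * ((1 - x j) * x j ^ (n + 2)) : ℝ) : ℂ) := by
    have h := riemannZeta_natCast_sub_riemannZeta_natCast_add_one (m := n + 2) (by omega)
    rw [Nat.cast_add, Nat.cast_ofNat] at h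
    rw [show (n : ℂ) + 3 = n + 2 + 1 by ring, h, tsum_mul_left, Complex.ofReal_mul]
  have hterm_nonneg (j n : ℕ) : 0 ≤ skewHarmonic (n + 2) * ((1 - x j) * x j ^ (n + 2)) :=
    mul_nonneg (skewHarmonic_nonneg _)
      (mul_nonneg (sub_nonneg.mpr (hx_lt j).le) (pow_nonneg (hx_pos j).le _))
  have hrow (j : ℕ) :=
    hasSum_skewHarmonic_add_two_mul (abs_lt.mpr ⟨by linarith [hx_pos j], hx_lt j⟩)
  rw [tsum_congr hzeta, ← Complex.ofReal_tsum,
    tsum_comm_of_nonneg hterm_nonneg hrow hasSum_log_one_add_inv_sub_inv_add_inv_sq.summable,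
    hasSum_log_one_add_inv_sub_inv_add_inv_sq.tsum_eq]
  push_cast
  ring
end
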